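/- Let AF = ⟨AR, attacks⟩ be a finite argumentation framework. Every model (not only minimal ones) of α(AF) determines an admissible set: if M ⊆ { d(a) | a ∈ AR } is a classical model of α(AF), then S = { a ∈ AR | d(a) ∉ M } is an admissible set of AF. -/
import Mathlib


inductive PForm (α : Type) where
  | atom : α → PForm α
  | tru : PForm α
  | fls : PForm α
  | neg : PForm α → PForm α
  | conj : PForm α → PForm α → PForm α
  | disj : PForm α → PForm α → PForm α
  | impl : PForm α → PForm α → PForm α
deriving DecidableEq

def PForm.eval {α : Type} (M : Set α) : PForm α → Prop
  | .atom a => a ∈ M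
  | .tru => True
  | .fls => False
  | .neg φ => ¬ PForm.eval M φ
  | .conj φ ψ => PForm.eval M φ ∧ PForm.eval M ψ
  | .disj φ ψ => PForm.eval M φ ∨ PForm.eval M ψ
  | .impl φ ψ => PForm.eval M φ → PForm.eval M ψ

def PForm.subst {α β : Type} (σ : α → PForm β) : PForm α → PForm β
  | .atom a => σ a
  | .tru => .tru
  | .fls => .fls
  | .neg φ => .neg (PForm.subst σ φ)
  | .conj φ ψ => .conj (PForm.subst σ φ) (PForm.subst σ ψ)
  | .disj φ ψ => .disj (PForm.subst σ φ) (PForm.subst σ ψ)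
  | .impl φ ψ => .impl (PForm.subst σ φ) (PForm.subst σ ψ)

def ModelOf {α : Type} (M : Set α) (T : Set (PForm α)) : Prop := ∀ φ ∈ T, PForm.eval M φ

def MinimalModel {α : Type} (M : Set α) (T : Set (PForm α)) : Prop :=
  ModelOf M T ∧ ∀ M', ModelOf M' T → M' ⊆ M → M' = M

def MaximalModel {α : Type} (M : Set α) (T : Set (PForm α)) : Prop :=
  ModelOf M T ∧ ∀ M', ModelOf M' T → M ⊆ M' → M' = M

noncomputable def bigConj {ι α : Type} (s : Finset ι) (f : ι → PForm α) : PForm α :=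
  (s.toList.map f).foldr PForm.conj PForm.tru

noncomputable def bigDisj {ι α : Type} (s : Finset ι) (f : ι → PForm α) : PForm α :=
  (s.toList.map f).foldr PForm.disj PForm.fls

def attackers {α : Type} [DecidableEq α] (att : Finset (α × α)) (a : α) : Finset α :=
  (att.filter (fun p => p.2 = a)).image Prod.fst

def conflictFree {α : Type} (att : Finset (α × α)) (S : Set α) : Prop :=
  ∀ a ∈ S, ∀ b ∈ S, (a, b) ∉ att

def acceptable {α : Type} (att : Finset (α × α)) (S : Set α) (a : α) : Prop :=
  ∀ b, (b, a) ∈ att → ∃ c ∈ S, (c, b) ∈ att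

def admissible {α : Type} (att : Finset (α × α)) (S : Set α) : Prop :=
  conflictFree att S ∧ ∀ a ∈ S, acceptable att S a

def preferredExt {α : Type} (att : Finset (α × α)) (S : Set α) : Prop :=
  admissible att S ∧ ∀ S', admissible att S' → S ⊆ S' → S' = S

noncomputable def alphaTheory {α : Type} [DecidableEq α] (att : Finset (α × α)) : Set (PForm α) :=
  { φ | ∃ p ∈ att, φ = PForm.impl (PForm.neg (PForm.atom p.1)) (PForm.atom p.2) } ∪
  { φ | ∃ p ∈ att, φ = PForm.impl (bigConj (attackers att p.1) PForm.atom) (PForm.atom p.2) }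

noncomputable def betaTheory {α : Type} [DecidableEq α] (att : Finset (α × α)) : Set (PForm α) :=
  { φ | ∃ p ∈ att, φ = PForm.impl (PForm.atom p.2) (PForm.neg (PForm.atom p.1)) } ∪
  { φ | ∃ p ∈ att, φ = PForm.impl (PForm.atom p.2) (bigDisj (attackers att p.1) PForm.atom) }

lemma eval_foldr_conj {α : Type} (M : Set α) (L : List (PForm α)) :
    PForm.eval M (L.foldr PForm.conj PForm.tru) ↔ ∀ φ ∈ L, PForm.eval M φ := by
  induction L with
  | nil => simp [PForm.eval]
  | cons h t ih => simp [PForm.eval, ih]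

lemma eval_bigConj {α : Type} (M : Set α) (s : Finset α) :
    PForm.eval M (bigConj s PForm.atom) ↔ ∀ x ∈ s, x ∈ M := by
  rw [bigConj, eval_foldr_conj]
  constructor
  · intro h x hx
    have := h (PForm.atom x) (by simp [Finset.mem_toList, hx])
    simpa [PForm.eval] using this
  · intro h φ hφ
    simp only [List.mem_map, Finset.mem_toList] at hφ
    obtain ⟨x, hx, rfl⟩ := hφ
    exact h x hx

theorem stmt12 {α : Type} [DecidableEq α] [Fintype α] (att : Finset (α × α)) (M : Set α)
    (hM : ModelOf M (alphaTheory att)) :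
    admissible att Mᶜ := by
  constructor
  · intro a ha b hb hab
    have h1 : PForm.impl (PForm.neg (PForm.atom a)) (PForm.atom b) ∈ alphaTheory att :=
      Or.inl ⟨(a, b), hab, rfl⟩
    have := hM _ h1
    simp only [PForm.eval] at this
    exact hb (this ha)
  · intro a ha b hba
    have h2 : PForm.impl (bigConj (attackers att b) PForm.atom) (PForm.atom a) ∈ alphaTheory att :=
      Or.inr ⟨(b, a), hba, rfl⟩
    have := hM _ h2
    simp only [PForm.eval] at this
    by_contra hc
    push_neg at hc
    apply ha
    apply this
    rw [eval_bigConj]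
    intro c hcatt
    by_contra hcM
    have : (c, b) ∈ att := by
      simp only [attackers, Finset.mem_image, Finset.mem_filter] at hcatt
      obtain ⟨p, ⟨hp, hp2⟩, rfl⟩ := hcatt
      rw [← hp2]
      simpa using hp
    exact hc c hcM this
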